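/- arXiv:1706.00953 — 2 statements merged into one kernel-verified Lean document; each statement's English description precedes it below -/
import Mathlib

section
/- For every n ≥ 1 and every admissible sequence (j_1,…,j_n), the Lebesgue measure of the ROE cylinder satisfies λ(Δ_{j_1…j_n}) = (∏_{i=1}^{n−1} a_i(j_i)/b_i(j_i)) · 1/(j_n·(j_n − 1)). In particular λ(Δ_{j_1}) = 1/(j_1·(j_1 − 1)). -/
/-!
On the cylinder with digits `j`, the first `n - 1` steps of the algorithm form an increasing affine
map of slope `∏ b_i(j_i)/a_i(j_i)`, and the condition `h_i(j_i) < j_{i+1}` makes every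
earlier digit condition a consequence of the last one. Hence, up to the points whose expansion
terminates, the cylinder is the preimage of the digit interval `(1/j_n, 1/(j_n - 1)]` under that
map. Terminating points are countable: such an expansion stops exactly when some `x_m` equals `1`,
and `x` is recovered from its first `m` digits and `x_m = 1`.
-/

open MeasureTheory Set

namespace ROE

/-- The `x`-sequence of the restricted Oppenheim algorithm applied to `x`:
index `k` corresponds to the paper's `x_{k+1}`, and `a k`, `b k` correspond to the paper's
`a_{k+1}`, `b_{k+1}`.  So `X a b x 0 = x₁ = x` and
`x_{k+2} = (b_{k+1}(d_{k+1})/a_{k+1}(d_{k+1})) · (x_{k+1} - 1/d_{k+1})`. -/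
noncomputable def X (a b : ℕ → ℕ → ℕ) (x : ℝ) : ℕ → ℝ
  | 0 => x
  | k + 1 =>
      let xk := X a b x k
      let d : ℕ := (⌊1 / xk⌋).toNat + 1
      ((b k d : ℝ) / (a k d : ℝ)) * (xk - 1 / (d : ℝ))

/-- The digit `d_{k+1}(x) = ⌊1/x_{k+1}⌋ + 1` of the restricted Oppenheim expansion. -/
noncomputable def D (a b : ℕ → ℕ → ℕ) (x : ℝ) (k : ℕ) : ℕ :=
  (⌊1 / X a b x k⌋).toNat + 1

/-- The restricted Oppenheim expansion of `x` is infinite: all `x_n` lie in `(0,1)`. -/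
def InfiniteROE (a b : ℕ → ℕ → ℕ) (x : ℝ) : Prop :=
  ∀ k, X a b x k ∈ Set.Ioo (0 : ℝ) 1

/-- The finite sequence `(j 0, …, j (n-1))` (the paper's `(j_1, …, j_n)`) is admissible:
`j_1 ≥ 2` and `j_{i+1} > h_i(j_i)`.  Here `h i` corresponds to the paper's `h_{i+1}`. -/
def Admissible (h : ℕ → ℕ → ℕ) (n : ℕ) (j : ℕ → ℕ) : Prop :=
  2 ≤ j 0 ∧ ∀ i, i + 1 < n → h i (j i) < j (i + 1)

/-- The cylinder of rank `n` with base `(j 0, …, j (n-1))`: the set of `x ∈ (0,1)` with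
infinite ROE whose first `n` digits are `j 0, …, j (n-1)`. -/
def cylinder (a b : ℕ → ℕ → ℕ) (n : ℕ) (j : ℕ → ℕ) : Set ℝ :=
  {x | x ∈ Set.Ioo (0 : ℝ) 1 ∧ InfiniteROE a b x ∧ ∀ i < n, D a b x i = j i}

/-- The difference-ROE digit `α_{k+1}(x)`: `α₁ = d₁ - 1`, `α_{k+2} = d_{k+2} - h_{k+1}(d_{k+1})`. -/
noncomputable def alpha (a b h : ℕ → ℕ → ℕ) (x : ℝ) : ℕ → ℕ
  | 0 => D a b x 0 - 1
  | k + 1 => D a b x (k + 1) - h k (D a b x k)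

/-- The digit sequence `d` reconstructed from a sequence `α` of difference-ROE symbols:
`d₁ = α₁ + 1`, `d_{k+2} = h_{k+1}(d_{k+1}) + α_{k+2}`. -/
def dSeq (h : ℕ → ℕ → ℕ) (α : ℕ → ℕ) : ℕ → ℕ
  | 0 => α 0 + 1
  | k + 1 => h k (dSeq h α k) + α (k + 1)

/-- The real number whose difference-ROE digits are `(α k)`:
`Φ(α) = Σ_{n≥1} (∏_{i=1}^{n-1} a_i(d_i)/b_i(d_i)) · (1/d_n)`. -/
noncomputable def Phi (a b h : ℕ → ℕ → ℕ) (α : ℕ → ℕ) : ℝ :=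
  ∑' n : ℕ, (∏ i ∈ Finset.range n, (a i (dSeq h α i) : ℝ) / (b i (dSeq h α i) : ℝ)) *
    (1 / (dSeq h α n : ℝ))

noncomputable def digit (t : ℝ) : ℕ := (⌊1 / t⌋).toNat + 1

def digitInterval (d : ℕ) : Set ℝ := Ioc (1 / (d : ℝ)) (1 / ((d : ℝ) - 1))

lemma D_eq_digit (a b : ℕ → ℕ → ℕ) (x : ℝ) (k : ℕ) : D a b x k = digit (X a b x k) := rfl

lemma digit_eq_iff {t : ℝ} {d : ℕ} (hd : 2 ≤ d) : digit t = d ↔ t ∈ digitInterval d := by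
  have hd' : (1 : ℝ) ≤ d - 1 := by
    have : (2 : ℝ) ≤ d := by exact_mod_cast hd
    linarith
  have hfloor : digit t = d ↔ ⌊1 / t⌋ = ((d - 1 : ℕ) : ℤ) := by
    unfold digit; omega
  rw [hfloor, Int.floor_eq_iff, digitInterval, mem_Ioc]
  push_cast [Nat.cast_sub (by omega : 1 ≤ d)]
  constructor
  · rintro ⟨hlo, hhi⟩
    have ht : 0 < t := one_div_pos.mp (by linarith)
    exact ⟨(one_div_lt (by linarith) ht).mpr (by linarith), (le_one_div ht (by linarith)).mpr hlo⟩
  · rintro ⟨hlo, hhi⟩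
    have ht : 0 < t := lt_trans (by positivity) hlo
    exact ⟨(le_one_div ht (by linarith)).mp hhi, by linarith [(one_div_lt (by linarith) ht).mp hlo]⟩

lemma two_le_digit {t : ℝ} (ht : t ∈ Ioo (0 : ℝ) 1) : 2 ≤ digit t := by
  have h1 : (1 : ℝ) ≤ 1 / t := by rw [le_div_iff₀ ht.1]; linarith [ht.2]
  have : 1 ≤ ⌊1 / t⌋ := Int.le_floor.mpr (by exact_mod_cast h1)
  unfold digit; omega

lemma mem_digitInterval_digit {t : ℝ} (ht : t ∈ Ioo (0 : ℝ) 1) : t ∈ digitInterval (digit t) :=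
  (digit_eq_iff (two_le_digit ht)).mp rfl

lemma digitInterval_subset_Ioc {d H : ℕ} (hH : 0 < H) (hHd : H < d) :
    digitInterval d ⊆ Ioc 0 (1 / (H : ℝ)) := by
  have hH' : (1 : ℝ) ≤ H := by exact_mod_cast hH
  have hHd' : (H : ℝ) ≤ d - 1 := by
    have : (H : ℝ) + 1 ≤ d := by exact_mod_cast hHd
    linarith
  exact Ioc_subset_Ioc (by positivity) (one_div_le_one_div_of_le (by linarith) hHd')

lemma volume_digitInterval {d : ℕ} (hd : 2 ≤ d) :
    volume (digitInterval d) = ENNReal.ofReal (1 / ((d : ℝ) * ((d : ℝ) - 1))) := by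
  have hd' : (1 : ℝ) < d := by exact_mod_cast hd
  have : (d : ℝ) - 1 ≠ 0 := by linarith
  rw [digitInterval, Real.volume_Ioc]
  congr 1
  field_simp
  ring

lemma mul_sub_one_div_mem_Ioc_iff {A B H d t : ℝ} (hA : 0 < A) (hB : 0 < B) (hd : 1 < d)
    (hH : B * H = A * d * (d - 1)) :
    B / A * (t - 1 / d) ∈ Ioc 0 (1 / H) ↔ t ∈ Ioc (1 / d) (1 / (d - 1)) := by
  have hc : 0 < B / A := div_pos hB hA
  have hd1 : d - 1 ≠ 0 := by linarith
  have hH' : 1 / H = B / A * (1 / (d - 1) - 1 / d) := by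
    have : H = A * d * (d - 1) / B := by field_simp; linarith
    rw [this]
    field_simp
    ring
  rw [hH', mem_Ioc, mem_Ioc, mul_pos_iff_of_pos_left hc, mul_le_mul_iff_right₀ hc]
  constructor <;> rintro ⟨h1, h2⟩ <;> constructor <;> linarith

noncomputable def step (a b : ℕ → ℕ → ℕ) (k d : ℕ) (t : ℝ) : ℝ :=
  (b k d : ℝ) / a k d * (t - 1 / d)

lemma X_succ (a b : ℕ → ℕ → ℕ) (x : ℝ) (k : ℕ) :
    X a b x (k + 1) = step a b k (D a b x k) (X a b x k) := rfl

/-- `x ↦ x_{k+1}` computed with the first `k` digits forced to be `j 0, …, j (k-1)`. -/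
noncomputable def XAlong (a b : ℕ → ℕ → ℕ) (j : ℕ → ℕ) : ℕ → ℝ → ℝ
  | 0 => id
  | k + 1 => step a b k (j k) ∘ XAlong a b j k

lemma X_eq_XAlong {a b : ℕ → ℕ → ℕ} {x : ℝ} {j : ℕ → ℕ} {m : ℕ}
    (hD : ∀ i < m, D a b x i = j i) : X a b x m = XAlong a b j m x := by
  induction m with
  | zero => rfl
  | succ m ih =>
    rw [X_succ, hD m m.lt_succ_self, ih fun i hi => hD i (hi.trans m.lt_succ_self)]
    rfl

lemma forall_D_eq_iff {a b : ℕ → ℕ → ℕ} {x : ℝ} {n : ℕ} {j : ℕ → ℕ} (hj : ∀ i < n, 2 ≤ j i) :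
    (∀ i < n, D a b x i = j i) ↔ ∀ i < n, XAlong a b j i x ∈ digitInterval (j i) := by
  induction n with
  | zero => simp
  | succ n ih =>
    rw [Nat.forall_lt_succ_right, Nat.forall_lt_succ_right, ← ih fun i hi => hj i (by omega)]
    exact and_congr_right fun hD => by
      rw [D_eq_digit, X_eq_XAlong hD, digit_eq_iff (hj n n.lt_succ_self)]

section PositiveWeights

variable {a b h : ℕ → ℕ → ℕ} (ha : ∀ k j, 2 ≤ j → 0 < a k j) (hb : ∀ k j, 2 ≤ j → 0 < b k j)
  (hab : ∀ k j, 2 ≤ j → b k j * h k j = a k j * j * (j - 1))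

include ha hab in
lemma h_pos {k d : ℕ} (hd : 2 ≤ d) : 0 < h k d := by
  have : 0 < b k d * h k d := by
    rw [hab k d hd]
    exact Nat.mul_pos (Nat.mul_pos (ha k d hd) (by omega)) (by omega)
  exact Nat.pos_of_mul_pos_left this

include ha hb hab in
lemma step_mem_Ioc_iff {k d : ℕ} (hd : 2 ≤ d) {t : ℝ} :
    step a b k d t ∈ Ioc 0 (1 / (h k d : ℝ)) ↔ t ∈ digitInterval d := by
  have hd' : (1 : ℝ) < d := by exact_mod_cast hd
  have hH : (b k d : ℝ) * h k d = a k d * d * (d - 1) := by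
    rw [← Nat.cast_pred (by omega)]
    exact_mod_cast hab k d hd
  exact mul_sub_one_div_mem_Ioc_iff (by exact_mod_cast ha k d hd) (by exact_mod_cast hb k d hd)
    hd' hH

include ha hb in
lemma slope_pos {k d : ℕ} (hd : 2 ≤ d) : (0 : ℝ) < b k d / a k d :=
  div_pos (by exact_mod_cast hb k d hd) (by exact_mod_cast ha k d hd)

include ha hb in
lemma step_strictMono {k d : ℕ} (hd : 2 ≤ d) : StrictMono (step a b k d) :=
  fun _ _ hst => mul_lt_mul_of_pos_left (by linarith) (slope_pos ha hb hd)

include ha hb in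
lemma volume_preimage_step {k d : ℕ} (hd : 2 ≤ d) (s : Set ℝ) :
    volume (step a b k d ⁻¹' s) = ENNReal.ofReal ((a k d : ℝ) / b k d) * volume s := by
  have hc := slope_pos (k := k) ha hb hd
  have hcomp : step a b k d ⁻¹' s =
      (fun t => t + -(1 / (d : ℝ))) ⁻¹' ((fun t => (b k d : ℝ) / a k d * t) ⁻¹' s) := by
    ext t; simp [step, sub_eq_add_neg]
  rw [hcomp, measure_preimage_add_right, Real.volume_preimage_mul_left hc.ne',
    abs_of_pos (inv_pos.mpr hc), inv_div]

include ha hb in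
lemma XAlong_strictMono {j : ℕ → ℕ} {m : ℕ} (hj : ∀ i < m, 2 ≤ j i) :
    StrictMono (XAlong a b j m) := by
  induction m with
  | zero => exact strictMono_id
  | succ m ih =>
    exact (step_strictMono ha hb (hj m m.lt_succ_self)).comp
      (ih fun i hi => hj i (hi.trans m.lt_succ_self))

include ha hb in
lemma volume_preimage_XAlong {j : ℕ → ℕ} {m : ℕ} (hj : ∀ i < m, 2 ≤ j i) (s : Set ℝ) :
    volume (XAlong a b j m ⁻¹' s) =
      ENNReal.ofReal (∏ i ∈ Finset.range m, (a i (j i) : ℝ) / b i (j i)) * volume s := by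
  induction m generalizing s with
  | zero => simp [XAlong]
  | succ m ih =>
    rw [XAlong, preimage_comp, ih (fun i hi => hj i (hi.trans m.lt_succ_self)),
      volume_preimage_step ha hb (hj m m.lt_succ_self), ← mul_assoc, ← ENNReal.ofReal_mul (by positivity),
      Finset.prod_range_succ]

include ha hb hab in
lemma X_succ_mem_Ioc {x : ℝ} {k : ℕ} (hk : X a b x k ∈ Ioo (0 : ℝ) 1) :
    X a b x (k + 1) ∈ Ioc (0 : ℝ) 1 := by
  have hd := two_le_digit hk
  have hmem := (step_mem_Ioc_iff (k := k) ha hb hab hd).mpr (mem_digitInterval_digit hk)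
  have hH : (1 : ℝ) ≤ h k (digit (X a b x k)) := by exact_mod_cast h_pos ha hab hd
  rw [X_succ, D_eq_digit]
  exact Ioc_subset_Ioc_right ((div_le_one (by linarith)).mpr hH) hmem

include ha hb hab in
lemma exists_X_eq_one {x : ℝ} (hx : x ∈ Ioc (0 : ℝ) 1) (hinf : ¬ InfiniteROE a b x) :
    ∃ m, (∀ i < m, X a b x i ∈ Ioo (0 : ℝ) 1) ∧ X a b x m = 1 := by
  classical
  have hex : ∃ k, X a b x k ∉ Ioo (0 : ℝ) 1 := by simpa [InfiniteROE] using hinf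
  have hmin : ∀ i < Nat.find hex, X a b x i ∈ Ioo (0 : ℝ) 1 :=
    fun i hi => not_not.mp (Nat.find_min hex hi)
  have hIoc : X a b x (Nat.find hex) ∈ Ioc (0 : ℝ) 1 := by
    cases hm : Nat.find hex with
    | zero => exact hx
    | succ p => exact X_succ_mem_Ioc ha hb hab (hmin p (by omega))
  exact ⟨Nat.find hex, hmin,
    le_antisymm hIoc.2 (not_lt.mp fun hlt => Nat.find_spec hex ⟨hIoc.1, hlt⟩)⟩

include ha hb in
lemma countable_X_eq_one (m : ℕ) :
    {x | (∀ i < m, X a b x i ∈ Ioo (0 : ℝ) 1) ∧ X a b x m = 1}.Countable := by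
  refine MapsTo.countable_of_injOn (f := fun x (i : Fin m) => D a b x i) (mapsTo_univ _ _) ?_
    countable_univ
  rintro x ⟨hx, hxm⟩ y ⟨-, hym⟩ hxy
  have hDy : ∀ i < m, D a b y i = D a b x i := fun i hi => (congrFun hxy ⟨i, hi⟩).symm
  refine (XAlong_strictMono (j := D a b x) ha hb fun i hi => two_le_digit (hx i hi)).injective ?_
  rw [← X_eq_XAlong fun _ _ => rfl, ← X_eq_XAlong hDy, hxm, hym]

include ha hb hab in
lemma countable_Ioc_diff_infiniteROE : (Ioc (0 : ℝ) 1 \ {x | InfiniteROE a b x}).Countable := by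
  refine (countable_iUnion (countable_X_eq_one ha hb)).mono ?_
  rintro x ⟨hx, hinf⟩
  exact mem_iUnion.mpr (exists_X_eq_one ha hb hab hx hinf)

include ha hb hab in
lemma volume_inter_infiniteROE {s : Set ℝ} (hs : s ⊆ Ioc 0 1) :
    volume (s ∩ {x | InfiniteROE a b x}) = volume s := by
  rw [← sdiff_sdiff_right_self]
  exact measure_sdiff_null
    (((countable_Ioc_diff_infiniteROE ha hb hab).mono (sdiff_subset_sdiff_left hs)).measure_zero _)

include ha hab in
lemma Admissible.two_le {n : ℕ} {j : ℕ → ℕ} (hadm : Admissible h n j) : ∀ i < n, 2 ≤ j i := by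
  intro i hi
  induction i with
  | zero => exact hadm.1
  | succ i ih =>
    have := h_pos (k := i) ha hab (ih (by omega))
    have := hadm.2 i hi
    omega

section Admissible

variable {n : ℕ} {j : ℕ → ℕ} (hadm : Admissible h n j)
include ha hb hab hadm

lemma Admissible.XAlong_mem_of_succ {k : ℕ} (hk : k + 1 < n) {x : ℝ}
    (hx : XAlong a b j (k + 1) x ∈ digitInterval (j (k + 1))) :
    XAlong a b j k x ∈ digitInterval (j k) := by
  have hj := hadm.two_le ha hab k (by omega)
  rw [← step_mem_Ioc_iff ha hb hab hj]
  exact digitInterval_subset_Ioc (h_pos ha hab hj) (hadm.2 k hk) hx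

lemma Admissible.forall_XAlong_mem_iff (hn : 1 ≤ n) {x : ℝ} :
    (∀ i < n, XAlong a b j i x ∈ digitInterval (j i)) ↔
      XAlong a b j (n - 1) x ∈ digitInterval (j (n - 1)) := by
  refine ⟨fun hall => hall (n - 1) (by omega), fun hlast i hi => ?_⟩
  exact Nat.decreasingInduction (motive := fun k _ => XAlong a b j k x ∈ digitInterval (j k))
    (fun k hk ih => hadm.XAlong_mem_of_succ ha hb hab (by omega) ih) hlast (by omega)

lemma Admissible.cylinder_eq (hn : 1 ≤ n) :
    cylinder a b n j =
      XAlong a b j (n - 1) ⁻¹' digitInterval (j (n - 1)) ∩ {x | InfiniteROE a b x} := by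
  ext x
  rw [cylinder, mem_ofPred_eq, forall_D_eq_iff (hadm.two_le ha hab),
    hadm.forall_XAlong_mem_iff ha hb hab hn]
  exact ⟨fun ⟨_, hinf, hx⟩ => ⟨hx, hinf⟩, fun ⟨hx, hinf⟩ => ⟨hinf 0, hinf, hx⟩⟩

lemma Admissible.preimage_XAlong_subset_Ioc (hn : 1 ≤ n) :
    XAlong a b j (n - 1) ⁻¹' digitInterval (j (n - 1)) ⊆ Ioc 0 1 := fun x hx => by
  simpa [XAlong] using digitInterval_subset_Ioc one_pos hadm.1
    ((hadm.forall_XAlong_mem_iff ha hb hab hn).mpr hx 0 (by omega))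

theorem Admissible.volume_cylinder (hn : 1 ≤ n) :
    volume (cylinder a b n j) =
      ENNReal.ofReal ((∏ i ∈ Finset.range (n - 1), (a i (j i) : ℝ) / (b i (j i) : ℝ)) *
        (1 / ((j (n - 1) : ℝ) * ((j (n - 1) : ℝ) - 1)))) := by
  have hj := hadm.two_le ha hab
  rw [hadm.cylinder_eq ha hb hab hn,
    volume_inter_infiniteROE ha hb hab (hadm.preimage_XAlong_subset_Ioc ha hb hab hn),
    volume_preimage_XAlong ha hb (fun i hi => hj i (by omega)), volume_digitInterval (hj _ (by omega)),
    ENNReal.ofReal_mul (by positivity)]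

end Admissible

end PositiveWeights

theorem measure_cylinder_general (a b h : ℕ → ℕ → ℕ)
    (ha : ∀ k j, 2 ≤ j → 0 < a k j) (hb : ∀ k j, 2 ≤ j → 0 < b k j)
    (hab : ∀ k j, 2 ≤ j → b k j * h k j = a k j * j * (j - 1))
    (n : ℕ) (hn : 1 ≤ n) (j : ℕ → ℕ) (hadm : Admissible h n j) :
    volume (cylinder a b n j) =
      ENNReal.ofReal
        ((∏ i ∈ Finset.range (n - 1), (a i (j i) : ℝ) / (b i (j i) : ℝ)) *
          (1 / ((j (n - 1) : ℝ) * ((j (n - 1) : ℝ) - 1)))) ∧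
    ∀ j₁ : ℕ, 2 ≤ j₁ →
      volume (cylinder a b 1 (fun _ => j₁)) =
        ENNReal.ofReal (1 / ((j₁ : ℝ) * ((j₁ : ℝ) - 1))) := by
  refine ⟨hadm.volume_cylinder ha hb hab hn, fun j₁ hj₁ => ?_⟩
  have hadm₁ : Admissible h 1 (fun _ => j₁) := ⟨hj₁, fun i hi => by omega⟩
  simpa using hadm₁.volume_cylinder ha hb hab le_rfl

/-- For every `n ≥ 1` and every admissible sequence `(j_1, …, j_n)`, the Lebesgue
measure of the ROE cylinder satisfies
`λ(Δ_{j_1…j_n}) = (∏_{i=1}^{n-1} a_i(j_i)/b_i(j_i)) · 1/(j_n (j_n - 1))`;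
in particular `λ(Δ_{j_1}) = 1/(j_1 (j_1 - 1))`. -/
theorem measure_cylinder (a b h : ℕ → ℕ → ℕ)
    (ha : ∀ k j, 2 ≤ j → 0 < a k j) (hb : ∀ k j, 2 ≤ j → 0 < b k j)
    (hpos : ∀ k j, 2 ≤ j → 0 < h k j)
    (hab : ∀ k j, 2 ≤ j → b k j * h k j = a k j * j * (j - 1))
    (n : ℕ) (hn : 1 ≤ n) (j : ℕ → ℕ) (hadm : Admissible h n j) :
    volume (cylinder a b n j) =
      ENNReal.ofReal
        ((∏ i ∈ Finset.range (n - 1), (a i (j i) : ℝ) / (b i (j i) : ℝ)) *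
          (1 / ((j (n - 1) : ℝ) * ((j (n - 1) : ℝ) - 1)))) ∧
    ∀ j₁ : ℕ, 2 ≤ j₁ →
      volume (cylinder a b 1 (fun _ => j₁)) =
        ENNReal.ofReal (1 / ((j₁ : ℝ) * ((j₁ : ℝ) - 1))) :=
  measure_cylinder_general a b h ha hb hab n hn j hadm

end ROE
end

section
/- For λ-almost every x ∈ (0,1), every positive integer i occurs only finitely many times among the difference Silvester digits of x; that is, λ-almost every x satisfies: for every i ≥ 1 the set {k : α_k(x) = i} is finite. -/
open MeasureTheory Set

namespace ROE

/-- The Silvester expansion is the ROE with `a_n ≡ 1` and `b_n ≡ 1`, for which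
`h_n(j) = j(j-1)`. -/
def silvesterA : ℕ → ℕ → ℕ := fun _ _ => 1

def silvesterB : ℕ → ℕ → ℕ := fun _ _ => 1

def silvesterH : ℕ → ℕ → ℕ := fun _ j => j * (j - 1)

/-!
Every `x ∈ (0,1)` has an infinite Silvester expansion, and the cylinder fixed by the digits
`d₁, …, d_{n+1}` is (up to the endpoint `1`) the interval `(s + 1/d, s + 1/(d-1)]`, where
`s = 1/d₁ + ⋯ + 1/dₙ` and `d = d_{n+1}`; its length is `1/(d(d-1))`.  Inside it, the event
`α_{n+2} = i` is the subcylinder with `d_{n+2} = d(d-1) + i`, whose length is smaller by a factor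
at most `1/(d(d-1)) ≤ 1/(n+1)²` because `d_{n+1} ≥ n+2`.  Summing over cylinders gives
`λ(α_{n+2} = i) ≤ 1/(n+1)²`, and Borel–Cantelli concludes.
-/

local notation "sX" => X silvesterA silvesterB
local notation "sD" => D silvesterA silvesterB
local notation "sCylinder" => cylinder silvesterA silvesterB
local notation "sAlpha" => alpha silvesterA silvesterB silvesterH

section Digits

variable {a b : ℕ → ℕ → ℕ} {x : ℝ} {k : ℕ}

theorem D_eq_iff (hX : 0 < X a b x k) {d : ℕ} (hd : 2 ≤ d) :
    D a b x k = d ↔ X a b x k ∈ Ioc (1 / (d : ℝ)) (1 / ((d : ℝ) - 1)) := by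
  set y := X a b x k
  have hd' : (1 : ℝ) < d := by exact_mod_cast hd
  calc D a b x k = d ↔ ⌊1 / y⌋ = ((d - 1 : ℕ) : ℤ) := by
        show (⌊1 / y⌋).toNat + 1 = d ↔ _; omega
    _ ↔ (d : ℝ) - 1 ≤ 1 / y ∧ 1 / y < d := by
      rw [Int.floor_eq_iff]; push_cast [Nat.cast_sub (by omega : 1 ≤ d)]; ring_nf
    _ ↔ _ := by
      rw [mem_Ioc, one_div_lt (by linarith) hX, le_one_div hX (by linarith), and_comm]

theorem two_le_D (h : X a b x k ∈ Ioo 0 1) : 2 ≤ D a b x k := by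
  have : (1 : ℤ) ≤ ⌊1 / X a b x k⌋ :=
    Int.le_floor.2 (by exact_mod_cast (one_lt_one_div h.1 h.2).le)
  unfold D
  omega

theorem X_mem_Ioc_D (h : X a b x k ∈ Ioo 0 1) :
    X a b x k ∈ Ioc (1 / (D a b x k : ℝ)) (1 / ((D a b x k : ℝ) - 1)) :=
  (D_eq_iff h.1 (two_le_D h)).1 rfl

theorem cylinder_succ (n : ℕ) (j : ℕ → ℕ) :
    cylinder a b (n + 1) j = cylinder a b n j ∩ {x | D a b x n = j n} := by
  ext x
  simp only [cylinder, mem_inter_iff, mem_ofPred_eq, Nat.lt_succ_iff_lt_or_eq, or_imp,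
    forall_and, forall_eq, and_assoc]

end Digits

theorem one_div_pred_sub_one_div {d : ℝ} (hd : 1 < d) :
    1 / (d - 1) - 1 / d = 1 / (d * (d - 1)) := by
  have : d - 1 ≠ 0 := by linarith
  field_simp
  ring

theorem one_div_pred_sub_one_div_le {m d d' : ℝ} (hm : 0 < m) (hd : m + 1 ≤ d)
    (hd' : d * (d - 1) + 1 ≤ d') :
    1 / (d' - 1) - 1 / d' ≤ 1 / m ^ 2 * (1 / (d - 1) - 1 / d) := by
  have hm2 : m ^ 2 ≤ d * (d - 1) := by nlinarith
  have hpos : 0 < m ^ 2 * (d * (d - 1)) := mul_pos (by positivity) (by nlinarith)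
  rw [one_div_pred_sub_one_div (by nlinarith), one_div_pred_sub_one_div (by linarith),
    one_div_mul_one_div]
  exact one_div_le_one_div_of_le hpos
    (mul_le_mul (by linarith) (by linarith) (by nlinarith) (by nlinarith))

section Silvester

variable {x : ℝ}

theorem silvester_X_succ (x : ℝ) (k : ℕ) : sX x (k + 1) = sX x k - 1 / sD x k := by
  simp [X, D, silvesterA, silvesterB]

theorem silvester_X_eq_sub_sum (x : ℝ) (k : ℕ) :
    sX x k = x - ∑ l ∈ Finset.range k, 1 / (sD x l : ℝ) := by
  induction k with
  | zero => simp [X]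
  | succ k ih => rw [silvester_X_succ, ih, Finset.sum_range_succ]; ring

theorem silvester_X_mem_Ioo (hx : x ∈ Ioo 0 1) (k : ℕ) : sX x k ∈ Ioo 0 1 := by
  induction k with
  | zero => exact hx
  | succ k ih =>
    have : (0 : ℝ) < 1 / sD x k := by have := two_le_D ih; positivity
    rw [silvester_X_succ]
    exact ⟨sub_pos.2 (X_mem_Ioc_D ih).1, by linarith [ih.2]⟩

theorem silvester_infiniteROE (hx : x ∈ Ioo 0 1) : InfiniteROE silvesterA silvesterB x :=
  silvester_X_mem_Ioo hx

theorem silvester_D_mul_pred_lt (hx : x ∈ Ioo 0 1) (k : ℕ) :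
    sD x k * (sD x k - 1) < sD x (k + 1) := by
  have hk := silvester_X_mem_Ioo hx k
  have hd : 2 ≤ sD x k := two_le_D hk
  have hd' : (2 : ℝ) ≤ sD x k := by exact_mod_cast hd
  have hlt : 1 / (sD x (k + 1) : ℝ) < 1 / ((sD x k : ℝ) * ((sD x k : ℝ) - 1)) := by
    rw [← one_div_pred_sub_one_div (by linarith)]
    linarith [(X_mem_Ioc_D (silvester_X_mem_Ioo hx (k + 1))).1, (X_mem_Ioc_D hk).2,
      silvester_X_succ x k]
  have hd₁ : (0 : ℝ) < sD x (k + 1) := by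
    have := two_le_D (silvester_X_mem_Ioo hx (k + 1)); positivity
  rw [one_div_lt_one_div hd₁ (by nlinarith)] at hlt
  have : ((sD x k * (sD x k - 1) : ℕ) : ℝ) < sD x (k + 1) := by
    push_cast [Nat.cast_sub (by omega : 1 ≤ sD x k)]
    exact hlt
  exact_mod_cast this

theorem silvester_admissible (hx : x ∈ Ioo 0 1) (n : ℕ) : Admissible silvesterH n (sD x) :=
  ⟨two_le_D (silvester_X_mem_Ioo hx 0), fun l _ => silvester_D_mul_pred_lt hx l⟩

theorem add_two_le_silvester_D (hx : x ∈ Ioo 0 1) (k : ℕ) : k + 2 ≤ sD x k := by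
  induction k with
  | zero => exact two_le_D (silvester_X_mem_Ioo hx 0)
  | succ k ih =>
    have := silvester_D_mul_pred_lt hx k
    have := Nat.le_mul_of_pos_right (sD x k) (by omega : 0 < sD x k - 1)
    omega

theorem silvester_D_succ_eq (hx : x ∈ Ioo 0 1) (k : ℕ) :
    sD x (k + 1) = sD x k * (sD x k - 1) + sAlpha x (k + 1) := by
  have := silvester_D_mul_pred_lt hx k
  simp only [alpha, silvesterH]
  omega

end Silvester

section Cylinder

variable {n : ℕ} {j : ℕ → ℕ}

theorem Admissible.mono {h : ℕ → ℕ → ℕ} {m : ℕ} (hj : Admissible h n j)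
    (hmn : m ≤ n) : Admissible h m j :=
  ⟨hj.1, fun l hl => hj.2 l (by omega)⟩

theorem Admissible.two_le_silvester (hj : Admissible silvesterH n j) {l : ℕ} (hl : l < n) :
    2 ≤ j l := by
  induction l with
  | zero => exact hj.1
  | succ l ih =>
    have h2 := ih (by omega)
    have hlt := hj.2 l hl
    have := Nat.mul_le_mul h2 (by omega : 1 ≤ j l - 1)
    simp only [silvesterH] at hlt
    omega

theorem Admissible.one_div_add_one_div_pred_le_silvester (hj : Admissible silvesterH (n + 2) j) :
    1 / (j n : ℝ) + 1 / ((j (n + 1) : ℝ) - 1) ≤ 1 / ((j n : ℝ) - 1) := by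
  have hd := hj.two_le_silvester (l := n) (by omega)
  have hd' : (2 : ℝ) ≤ j n := by exact_mod_cast hd
  have hstep : (j n : ℝ) * ((j n : ℝ) - 1) + 1 ≤ j (n + 1) := by
    have : ((j n * (j n - 1) + 1 : ℕ) : ℝ) ≤ j (n + 1) := by exact_mod_cast hj.2 n (by omega)
    push_cast [Nat.cast_sub (by omega : 1 ≤ j n)] at this
    exact this
  have : 1 / ((j (n + 1) : ℝ) - 1) ≤ 1 / ((j n : ℝ) * ((j n : ℝ) - 1)) :=
    one_div_le_one_div_of_le (by nlinarith) (by linarith)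
  linarith [one_div_pred_sub_one_div (show (1 : ℝ) < j n by linarith)]

theorem Admissible.sum_add_one_div_pred_le_one_silvester (hj : Admissible silvesterH (n + 1) j) :
    ∑ l ∈ Finset.range n, 1 / (j l : ℝ) + 1 / ((j n : ℝ) - 1) ≤ 1 := by
  induction n with
  | zero =>
    have : (2 : ℝ) ≤ j 0 := by exact_mod_cast hj.1
    rw [Finset.sum_range_zero, zero_add, div_le_one (by linarith)]
    linarith
  | succ n ih =>
    rw [Finset.sum_range_succ]
    linarith [ih (hj.mono (by omega)), hj.one_div_add_one_div_pred_le_silvester]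

theorem silvester_cylinder_zero (j : ℕ → ℕ) : sCylinder 0 j = Ioo 0 1 := by
  ext y
  simp only [cylinder, mem_ofPred_eq, Nat.not_lt_zero, false_imp_iff, implies_true, and_true]
  exact ⟨And.left, fun hy => ⟨hy, silvester_infiniteROE hy⟩⟩

theorem silvester_X_eq_of_mem_cylinder {y : ℝ} (hy : y ∈ sCylinder n j) :
    sX y n = y - ∑ l ∈ Finset.range n, 1 / (j l : ℝ) := by
  rw [silvester_X_eq_sub_sum]
  congr 1
  exact Finset.sum_congr rfl fun l hl => by rw [hy.2.2 l (Finset.mem_range.1 hl)]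

theorem silvester_D_eq_iff_of_mem_cylinder {y : ℝ} (hy : y ∈ sCylinder n j) {d : ℕ}
    (hd : 2 ≤ d) :
    sD y n = d ↔ y ∈ Ioc (∑ l ∈ Finset.range n, 1 / (j l : ℝ) + 1 / (d : ℝ))
      (∑ l ∈ Finset.range n, 1 / (j l : ℝ) + 1 / ((d : ℝ) - 1)) := by
  rw [D_eq_iff (silvester_X_mem_Ioo hy.1 n).1 hd, silvester_X_eq_of_mem_cylinder hy,
    sub_mem_Ioc_iff_left, add_comm (1 / (d : ℝ)), add_comm (1 / ((d : ℝ) - 1))]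

theorem silvester_cylinder_succ (hd : 2 ≤ j n) :
    sCylinder (n + 1) j = sCylinder n j ∩
      Ioc (∑ l ∈ Finset.range n, 1 / (j l : ℝ) + 1 / (j n : ℝ))
        (∑ l ∈ Finset.range n, 1 / (j l : ℝ) + 1 / ((j n : ℝ) - 1)) := by
  rw [cylinder_succ]
  ext y
  exact and_congr_right (silvester_D_eq_iff_of_mem_cylinder · hd)

theorem silvester_cylinder_eq (hj : Admissible silvesterH (n + 1) j) :
    sCylinder (n + 1) j = Ioo 0 1 ∩
      Ioc (∑ l ∈ Finset.range n, 1 / (j l : ℝ) + 1 / (j n : ℝ))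
        (∑ l ∈ Finset.range n, 1 / (j l : ℝ) + 1 / ((j n : ℝ) - 1)) := by
  induction n with
  | zero => rw [silvester_cylinder_succ hj.1, silvester_cylinder_zero]
  | succ n ih =>
    rw [silvester_cylinder_succ (hj.two_le_silvester (by omega)), ih (hj.mono (by omega)),
      inter_assoc, inter_eq_right.2 (Ioc_subset_Ioc _ _)]
    · rw [Finset.sum_range_succ]
      have : (0 : ℝ) ≤ 1 / (j (n + 1) : ℝ) := by positivity
      linarith
    · rw [Finset.sum_range_succ]
      linarith [hj.one_div_add_one_div_pred_le_silvester]

theorem volume_silvester_cylinder (hj : Admissible silvesterH (n + 1) j) :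
    volume (sCylinder (n + 1) j) = ENNReal.ofReal (1 / ((j n : ℝ) - 1) - 1 / (j n : ℝ)) := by
  rw [silvester_cylinder_eq hj]
  set s := ∑ l ∈ Finset.range n, 1 / (j l : ℝ)
  have hlo : 0 ≤ s + 1 / (j n : ℝ) := by positivity
  have hhi : s + 1 / ((j n : ℝ) - 1) ≤ 1 := hj.sum_add_one_div_pred_le_one_silvester
  apply le_antisymm
  · calc _ ≤ volume (Ioc (s + 1 / (j n : ℝ)) (s + 1 / ((j n : ℝ) - 1))) :=
          measure_mono inter_subset_right
      _ = _ := by rw [Real.volume_Ioc]; congr 1; ring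
  · calc _ = volume (Ioo (s + 1 / (j n : ℝ)) (s + 1 / ((j n : ℝ) - 1))) := by
          rw [Real.volume_Ioo]; congr 1; ring
      _ ≤ _ := measure_mono (subset_inter (Ioo_subset_Ioo hlo hhi) Ioo_subset_Ioc_self)

theorem measurableSet_silvester_cylinder (hj : Admissible silvesterH (n + 1) j) :
    MeasurableSet (sCylinder (n + 1) j) := by
  rw [silvester_cylinder_eq hj]
  exact measurableSet_Ioo.inter measurableSet_Ioc

end Cylinder

section Measure

variable {x : ℝ}

theorem volume_alpha_eq_inter_silvester_cylinder_le (hx : x ∈ Ioo 0 1) (n i : ℕ)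
    (hi : 1 ≤ i) :
    volume ({y | sAlpha y (n + 1) = i} ∩ sCylinder (n + 1) (sD x))
      ≤ ENNReal.ofReal (1 / ((n : ℝ) + 1) ^ 2) * volume (sCylinder (n + 1) (sD x)) := by
  set d := sD x n
  set s := ∑ l ∈ Finset.range (n + 1), 1 / (sD x l : ℝ)
  have hd : n + 2 ≤ d := add_two_le_silvester_D hx n
  have hd₁ : d ≤ d * (d - 1) := Nat.le_mul_of_pos_right d (by omega)
  set d' := d * (d - 1) + i
  have hsub : {y | sAlpha y (n + 1) = i} ∩ sCylinder (n + 1) (sD x) ⊆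
      Ioc (s + 1 / (d' : ℝ)) (s + 1 / ((d' : ℝ) - 1)) := by
    rintro y ⟨hα, hy⟩
    refine (silvester_D_eq_iff_of_mem_cylinder hy (by omega)).1 ?_
    rw [silvester_D_succ_eq hy.1, hy.2.2 n n.lt_succ_self, show sAlpha y (n + 1) = i from hα]
  have hdR : (n : ℝ) + 1 + 1 ≤ d := by exact_mod_cast hd
  have hd'R : (d : ℝ) * ((d : ℝ) - 1) + 1 ≤ d' := by
    have : (1 : ℝ) ≤ i := by exact_mod_cast hi
    push_cast [d', Nat.cast_sub (by omega : 1 ≤ d)]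
    linarith
  calc volume ({y | sAlpha y (n + 1) = i} ∩ sCylinder (n + 1) (sD x))
      ≤ volume (Ioc (s + 1 / (d' : ℝ)) (s + 1 / ((d' : ℝ) - 1))) := measure_mono hsub
    _ = ENNReal.ofReal (1 / ((d' : ℝ) - 1) - 1 / d') := by rw [Real.volume_Ioc]; congr 1; ring
    _ ≤ ENNReal.ofReal (1 / ((n : ℝ) + 1) ^ 2 * (1 / ((d : ℝ) - 1) - 1 / d)) :=
        ENNReal.ofReal_le_ofReal (one_div_pred_sub_one_div_le (by positivity) hdR hd'R)
    _ = _ := by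
      rw [ENNReal.ofReal_mul (by positivity), volume_silvester_cylinder (silvester_admissible hx _)]

theorem volume_alpha_succ_eq_inter_Ioo_le (n i : ℕ) (hi : 1 ≤ i) :
    volume ({x | sAlpha x (n + 1) = i} ∩ Ioo 0 1) ≤
      ENNReal.ofReal (1 / ((n : ℝ) + 1) ^ 2) := by
  set ε := ENNReal.ofReal (1 / ((n : ℝ) + 1) ^ 2)
  set A := {x | sAlpha x (n + 1) = i}
  set π : ℝ → Fin (n + 1) → ℕ := fun x l => sD x l
  set F : (Fin (n + 1) → ℕ) → Set ℝ := fun v => Ioo 0 1 ∩ π ⁻¹' {v}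
  have hF : ∀ x ∈ Ioo (0 : ℝ) 1, F (π x) = sCylinder (n + 1) (sD x) := fun x _ => by
    ext y
    simp only [F, π, cylinder, mem_inter_iff, mem_preimage, mem_singleton_iff, funext_iff,
      Fin.forall_iff, mem_ofPred_eq]
    exact ⟨fun h => ⟨h.1, silvester_infiniteROE h.1, h.2⟩, fun h => ⟨h.1, h.2.2⟩⟩
  have hfiber : ∀ v, MeasurableSet (F v) ∧ volume (A ∩ F v) ≤ ε * volume (F v) := by
    intro v
    by_cases hv : ∃ x ∈ Ioo (0 : ℝ) 1, π x = v
    · obtain ⟨x, hx, rfl⟩ := hv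
      rw [hF x hx]
      exact ⟨measurableSet_silvester_cylinder (silvester_admissible hx _),
        volume_alpha_eq_inter_silvester_cylinder_le hx n i hi⟩
    · have : F v = ∅ := eq_empty_of_forall_notMem fun x hx => hv ⟨x, hx.1, hx.2⟩
      simp [this]
  have hdisj : Pairwise (Function.onFun Disjoint F) := fun v w hvw =>
    ((disjoint_singleton.2 hvw).preimage π).mono inter_subset_right inter_subset_right
  calc volume (A ∩ Ioo 0 1) ≤ volume (⋃ v, A ∩ F v) :=
        measure_mono fun x hx => mem_iUnion.2 ⟨π x, hx.1, hx.2, rfl⟩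
    _ ≤ ∑' v, volume (A ∩ F v) := measure_iUnion_le _
    _ ≤ ∑' v, ε * volume (F v) := ENNReal.tsum_le_tsum fun v => (hfiber v).2
    _ = ε * volume (⋃ v, F v) := by
      rw [ENNReal.tsum_mul_left, measure_iUnion hdisj fun v => (hfiber v).1]
    _ ≤ ε * volume (Ioo (0 : ℝ) 1) := by gcongr; exact iUnion_subset fun v => inter_subset_left
    _ = ε := by simp [Real.volume_Ioo]

theorem tsum_ofReal_one_div_add_one_sq_ne_top :
    ∑' n : ℕ, ENNReal.ofReal (1 / ((n : ℝ) + 1) ^ 2) ≠ ⊤ := by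
  have : Summable fun n : ℕ => 1 / ((n : ℝ) + 1) ^ 2 := by
    simpa using (summable_nat_add_iff 1).2 (Real.summable_one_div_nat_pow.2 one_lt_two)
  rw [← ENNReal.ofReal_tsum_of_nonneg (fun n => by positivity) this]
  exact ENNReal.ofReal_ne_top

theorem ae_finite_setOf_alpha_succ_eq (i : ℕ) (hi : 1 ≤ i) :
    ∀ᵐ x ∂(volume.restrict (Ioo (0 : ℝ) 1)), {n | sAlpha x (n + 1) = i}.Finite := by
  refine ae_finite_setOfPred_mem (s := fun n => {x | sAlpha x (n + 1) = i}) ?_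
  refine ne_top_of_le_ne_top tsum_ofReal_one_div_add_one_sq_ne_top
    (ENNReal.tsum_le_tsum fun n => ?_)
  rw [Measure.restrict_apply' measurableSet_Ioo]
  exact volume_alpha_succ_eq_inter_Ioo_le n i hi

end Measure

/-- For `λ`-almost every `x ∈ (0,1)`, every positive integer `i` occurs only
finitely many times among the difference Silvester digits `α_k(x)` of `x`. -/
theorem silvester_ae_finitely_many_occurrences :
    ∀ᵐ x ∂(volume.restrict (Set.Ioo (0 : ℝ) 1)),
      InfiniteROE silvesterA silvesterB x →
        ∀ i : ℕ, 1 ≤ i → {k : ℕ | alpha silvesterA silvesterB silvesterH x k = i}.Finite := by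
  have hfin : ∀ᵐ x ∂(volume.restrict (Ioo (0 : ℝ) 1)),
      ∀ i, 1 ≤ i → {n | sAlpha x (n + 1) = i}.Finite :=
    ae_all_iff.2 fun i => Filter.eventually_imp_distrib_left.2 (ae_finite_setOf_alpha_succ_eq i)
  filter_upwards [hfin] with x hx _ i hi
  refine (((hx i hi).image (· + 1)).insert 0).subset ?_
  rintro (_ | k) hk
  · exact mem_insert 0 _
  · exact mem_insert_of_mem 0 ⟨k, hk, rfl⟩

end ROE
end
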